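/- In the root system of type D_n (n ≥ 4) realized in ℝ^n, the Kostant cascade is: β_i = ε_{2i-1} + ε_{2i} for 1 ≤ i ≤ ⌊(n−1)/2⌋, together with α_{2i-1} = ε_{2i-1} − ε_{2i} for 1 ≤ i ≤ ⌊(n−1)/2⌋ if n is odd; and additionally α_n = ε_{n-1} + ε_n, and α_{2i-1} for 1 ≤ i ≤ n/2, if n is even. -/

import Mathlib

/- Kostant cascade machinery for a root system in a real inner product space. -/

open scoped RealInnerProductSpace

variable {V : Type*} [NormedAddCommGroup V] [InnerProductSpace ℝ V]

/-- Two roots of `Rs` are linked if they are not orthogonal. -/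
def Linked (Rs : Set V) (a b : V) : Prop := a ∈ Rs ∧ b ∈ Rs ∧ ⟪a, b⟫ ≠ 0

/-- `C` is an irreducible component of the root subsystem `Rs` :
it is a connectedness class of the non-orthogonality relation. -/
def IsComponent (Rs : Set V) (C : Set V) : Prop :=
  ∃ a ∈ Rs, C = {b | Relation.ReflTransGen (Linked Rs) a b}

/-- `β` is the highest root of the (irreducible) subsystem `C` of `Rs`
with respect to the positive system `pos`. -/
def IsHighestRoot (Rs pos C : Set V) (β : V) : Prop :=
  β ∈ C ∧ β ∈ pos ∧ ∀ α ∈ C, α ∈ pos → β + α ∉ Rs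

/-- The subsystems occurring in the recursive construction of the Kostant cascade:
irreducible components of `Rs`, and recursively irreducible components of the
orthogonal complement of the highest root of a cascade subsystem. -/
inductive CascadeSub (Rs pos : Set V) : Set V → Prop
  | base (C : Set V) : IsComponent Rs C → CascadeSub Rs pos C
  | step (K C : Set V) (β : V) : CascadeSub Rs pos K → IsHighestRoot Rs pos K β →
      IsComponent {α ∈ K | ⟪α, β⟫ = 0} C → CascadeSub Rs pos C

/-- The Kostant cascade `β_π` : the highest roots of the cascade subsystems. -/
def cascadeSet (Rs pos : Set V) : Set V :=
  {β | ∃ K, CascadeSub Rs pos K ∧ IsHighestRoot Rs pos K β}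

/-- `H_β = {α ∈ Δ_K : (α, β) > 0}` where `Δ_K` is the cascade subsystem with
highest root `β`. -/
def cascadeH (Rs pos : Set V) (β : V) : Set V :=
  {α | ∃ K, CascadeSub Rs pos K ∧ IsHighestRoot Rs pos K β ∧ α ∈ K ∧ 0 < ⟪α, β⟫}

/-- 1-based orthonormal basis vectors `ε_k` of `ℝ^n` (zero out of range). -/
noncomputable def eps (n k : ℕ) : EuclideanSpace ℝ (Fin n) :=
  if h : 1 ≤ k ∧ k ≤ n then EuclideanSpace.single ⟨k - 1, by omega⟩ (1 : ℝ) else 0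

/-- Positive roots of the type `D_n` root system in `ℝ^n`. -/
noncomputable def posD (n : ℕ) : Set (EuclideanSpace ℝ (Fin n)) :=
  {v | ∃ i j, 1 ≤ i ∧ i < j ∧ j ≤ n ∧ (v = eps n i - eps n j ∨ v = eps n i + eps n j)}

/-- The type `D_n` root system in `ℝ^n` : `{±ε_i ± ε_j : i < j}`. -/
noncomputable def rootsD (n : ℕ) : Set (EuclideanSpace ℝ (Fin n)) :=
  posD n ∪ {v | -v ∈ posD n}

/-! Write `D(l)` (`rootsDFrom n l`) for the roots `±ε_i ± ε_j` with `l ≤ i, j`. When at least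
three coordinates `l, …, n` remain, `D(l)` is irreducible, its highest root is `ε_l + ε_{l+1}`,
and the roots of `D(l)` orthogonal to it are `±(ε_l - ε_{l+1})` together with `D(l+2)`; with two
coordinates left, `D(l)` splits into the two orthogonal `A₁`'s `±(ε_l - ε_{l+1})` and
`±(ε_l + ε_{l+1})`. So the cascade subsystems are the `D(l)` and these `A₁`'s for odd `l`, and
the cascade consists of the roots `ε_l ± ε_{l+1}` with `l` odd and `l + 1 ≤ n`. -/

theorem mem_of_reflTransGen_linked {S : Set V} {a b : V} (ha : a ∈ S)
    (h : Relation.ReflTransGen (Linked S) a b) : b ∈ S := by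
  induction h with
  | refl => exact ha
  | tail _ hbc _ => exact hbc.2.1

theorem isComponent_iff_of_connected {S C : Set V} (hne : S.Nonempty)
    (hconn : ∀ a ∈ S, ∀ b ∈ S, Relation.ReflTransGen (Linked S) a b) :
    IsComponent S C ↔ C = S := by
  have hclass : ∀ a ∈ S, {b | Relation.ReflTransGen (Linked S) a b} = S := fun a ha =>
    Set.Subset.antisymm (fun _ hb => mem_of_reflTransGen_linked ha hb) (hconn a ha)
  constructor
  · rintro ⟨a, ha, rfl⟩
    exact hclass a ha
  · rintro rfl
    obtain ⟨a, ha⟩ := hne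
    exact ⟨a, ha, (hclass a ha).symm⟩

theorem not_isComponent_empty (C : Set V) : ¬IsComponent ∅ C :=
  fun ⟨_, ha, _⟩ => ha

theorem reflTransGen_linked_union_iff {S T : Set V} (horth : ∀ x ∈ S, ∀ y ∈ T, ⟪x, y⟫ = 0)
    {a b : V} (ha : a ∈ S) :
    Relation.ReflTransGen (Linked (S ∪ T)) a b ↔ Relation.ReflTransGen (Linked S) a b := by
  constructor
  · intro h
    induction h with
    | refl => rfl
    | tail _ hbc ih =>
      obtain ⟨-, hc, hne⟩ := hbc
      have hb := mem_of_reflTransGen_linked ha ih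
      exact ih.tail ⟨hb, hc.resolve_right fun hcT => hne (horth _ hb _ hcT), hne⟩
  · exact Relation.ReflTransGen.mono
      (fun x y (h : Linked S x y) => (⟨Or.inl h.1, Or.inl h.2.1, h.2.2⟩ : Linked (S ∪ T) x y)) _ _

theorem isComponent_union_iff {S T C : Set V} (horth : ∀ x ∈ S, ∀ y ∈ T, ⟪x, y⟫ = 0) :
    IsComponent (S ∪ T) C ↔ IsComponent S C ∨ IsComponent T C := by
  have horth' : ∀ y ∈ T, ∀ x ∈ S, ⟪y, x⟫ = 0 := fun y hy x hx => by
    rw [real_inner_comm]; exact horth x hx y hy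
  have hclassS : ∀ a ∈ S, {b | Relation.ReflTransGen (Linked (S ∪ T)) a b} =
      {b | Relation.ReflTransGen (Linked S) a b} := fun a ha => by
    ext b; exact reflTransGen_linked_union_iff horth ha
  have hclassT : ∀ a ∈ T, {b | Relation.ReflTransGen (Linked (S ∪ T)) a b} =
      {b | Relation.ReflTransGen (Linked T) a b} := fun a ha => by
    ext b; rw [Set.mem_ofPred_eq, Set.union_comm]; exact reflTransGen_linked_union_iff horth' ha
  constructor
  · rintro ⟨a, ha | ha, rfl⟩
    · exact Or.inl ⟨a, ha, hclassS a ha⟩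
    · exact Or.inr ⟨a, ha, hclassT a ha⟩
  · rintro (⟨a, ha, rfl⟩ | ⟨a, ha, rfl⟩)
    · exact ⟨a, Or.inl ha, (hclassS a ha).symm⟩
    · exact ⟨a, Or.inr ha, (hclassT a ha).symm⟩

theorem inner_ne_zero_of_mem_pair {r a b : V} (hr : r ≠ 0) (ha : a ∈ ({r, -r} : Set V))
    (hb : b ∈ ({r, -r} : Set V)) : ⟪a, b⟫ ≠ 0 := by
  rcases ha with rfl | rfl <;> rcases hb with rfl | rfl <;> simp [hr]

theorem isComponent_pair_iff {r : V} (hr : r ≠ 0) {C : Set V} :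
    IsComponent {r, -r} C ↔ C = {r, -r} :=
  isComponent_iff_of_connected ⟨r, Or.inl rfl⟩ fun _ ha _ hb =>
    .single ⟨ha, hb, inner_ne_zero_of_mem_pair hr ha hb⟩

theorem sep_pair_inner_eq_zero {r β : V} (hr : r ≠ 0) (hβ : β ∈ ({r, -r} : Set V)) :
    {α ∈ ({r, -r} : Set V) | ⟪α, β⟫ = 0} = ∅ :=
  Set.eq_empty_of_forall_notMem fun _ hα => inner_ne_zero_of_mem_pair hr hα.1 hβ hα.2

theorem add_notMem_of_inner_nonneg {Rs : Set V} {c : ℝ} (hRs : ∀ x ∈ Rs, ⟪x, x⟫ = c)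
    (hc : 0 < c) {a b : V} (ha : a ∈ Rs) (hb : b ∈ Rs) (hab : 0 ≤ ⟪a, b⟫) : a + b ∉ Rs := by
  intro h
  have := hRs _ h
  rw [real_inner_add_add_self, hRs a ha, hRs b hb] at this
  linarith

theorem isHighestRoot_pair_iff {W : Type*} [NormedAddCommGroup W] {Rs pos : Set W} {r β : W}
    (hr : r ∈ pos) (hnr : -r ∉ pos) (h2r : r + r ∉ Rs) :
    IsHighestRoot Rs pos {r, -r} β ↔ β = r := by
  constructor
  · rintro ⟨rfl | rfl, hβ, -⟩
    · rfl
    · exact absurd hβ hnr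
  · rintro rfl
    refine ⟨Or.inl rfl, hr, ?_⟩
    rintro α (rfl | rfl) hα
    · exact h2r
    · exact absurd hα hnr

section TypeD

variable {n : ℕ}

theorem inner_eps_self {k : ℕ} (h1 : 1 ≤ k) (hk : k ≤ n) : ⟪eps n k, eps n k⟫ = 1 := by
  simp [eps, h1, hk]

theorem inner_eps_of_ne {i j : ℕ} (h : i ≠ j) : ⟪eps n i, eps n j⟫ = 0 := by
  unfold eps
  split_ifs with hi hj <;> simp [EuclideanSpace.inner_single_left, PiLp.single_apply]
  omega

theorem inner_eps_eps {i j : ℕ} (hi : 1 ≤ i) (hin : i ≤ n) :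
    ⟪eps n i, eps n j⟫ = if i = j then 1 else 0 := by
  split_ifs with h
  · subst h; exact inner_eps_self hi hin
  · exact inner_eps_of_ne h

/-- Pairing with this vector is a height function that is positive on `posD n`. -/
noncomputable def heightVector (n : ℕ) : EuclideanSpace ℝ (Fin n) :=
  WithLp.toLp 2 fun k => (n : ℝ) - k

theorem inner_eps_heightVector {k : ℕ} (h1 : 1 ≤ k) (hk : k ≤ n) :
    ⟪eps n k, heightVector n⟫ = n + 1 - k := by
  simp [eps, h1, hk, heightVector, EuclideanSpace.inner_single_left]
  ring

theorem inner_heightVector_pos {v : EuclideanSpace ℝ (Fin n)} (hv : v ∈ posD n) :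
    0 < ⟪v, heightVector n⟫ := by
  obtain ⟨i, j, hi, hij, hj, rfl | rfl⟩ := hv <;>
    simp only [inner_sub_left, inner_add_left, inner_eps_heightVector hi (hij.trans_le hj).le,
      inner_eps_heightVector (hi.trans hij.le) hj] <;>
    · have : (i : ℝ) < j := by exact_mod_cast hij
      have : (j : ℝ) ≤ n := by exact_mod_cast hj
      linarith

theorem neg_notMem_posD {v : EuclideanSpace ℝ (Fin n)} (hv : v ∈ posD n) : -v ∉ posD n := by
  intro h
  have := inner_heightVector_pos h
  rw [inner_neg_left] at this
  linarith [inner_heightVector_pos hv]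

/-- The subsystem of type `D_{n-l+1}` on the coordinates `l, …, n` (for `1 ≤ l`, as
`eps n 0 = 0`). -/
def rootsDFrom (n l : ℕ) : Set (EuclideanSpace ℝ (Fin n)) :=
  {v | ∃ i j s e, l ≤ i ∧ l ≤ j ∧ i ≤ n ∧ j ≤ n ∧ i ≠ j ∧ (s = (1 : ℝ) ∨ s = -1) ∧
    (e = (1 : ℝ) ∨ e = -1) ∧ v = s • eps n i + e • eps n j}

variable {l : ℕ}

theorem eps_add_eps_mem_rootsDFrom {i j : ℕ} (hi : l ≤ i) (hj : l ≤ j) (hin : i ≤ n)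
    (hjn : j ≤ n) (hij : i ≠ j) : eps n i + eps n j ∈ rootsDFrom n l :=
  ⟨i, j, 1, 1, hi, hj, hin, hjn, hij, .inl rfl, .inl rfl, by simp⟩

theorem eps_sub_eps_mem_rootsDFrom {i j : ℕ} (hi : l ≤ i) (hj : l ≤ j) (hin : i ≤ n)
    (hjn : j ≤ n) (hij : i ≠ j) : eps n i - eps n j ∈ rootsDFrom n l :=
  ⟨i, j, 1, -1, hi, hj, hin, hjn, hij, .inl rfl, .inr rfl, by simp [sub_eq_add_neg]⟩

theorem neg_mem_rootsDFrom {v : EuclideanSpace ℝ (Fin n)} (hv : v ∈ rootsDFrom n l) :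
    -v ∈ rootsDFrom n l := by
  obtain ⟨i, j, s, e, hi, hj, hin, hjn, hij, hs, he, rfl⟩ := hv
  refine ⟨i, j, -s, -e, hi, hj, hin, hjn, hij, ?_, ?_, by module⟩
  · rcases hs with rfl | rfl <;> norm_num
  · rcases he with rfl | rfl <;> norm_num

theorem rootsDFrom_mono {l m : ℕ} (h : l ≤ m) : rootsDFrom n m ⊆ rootsDFrom n l :=
  fun _ ⟨i, j, s, e, hi, hj, hrest⟩ => ⟨i, j, s, e, h.trans hi, h.trans hj, hrest⟩

theorem eps_add_eps_succ_mem_rootsDFrom (hn : l + 1 ≤ n) :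
    eps n l + eps n (l + 1) ∈ rootsDFrom n l :=
  eps_add_eps_mem_rootsDFrom le_rfl (by omega) (by omega) hn (by omega)

theorem eps_sub_eps_succ_mem_rootsDFrom (hn : l + 1 ≤ n) :
    eps n l - eps n (l + 1) ∈ rootsDFrom n l :=
  eps_sub_eps_mem_rootsDFrom le_rfl (by omega) (by omega) hn (by omega)

theorem eps_add_eps_mem_posD {i j : ℕ} (hi : 1 ≤ i) (hj : 1 ≤ j) (hin : i ≤ n) (hjn : j ≤ n)
    (hij : i ≠ j) : eps n i + eps n j ∈ posD n := by
  rcases hij.lt_or_gt with h | h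
  · exact ⟨i, j, hi, h, hjn, .inr rfl⟩
  · exact ⟨j, i, hj, h, hin, .inr (add_comm _ _)⟩

theorem smul_eps_add_smul_eps_mem_rootsD {i j : ℕ} {s e : ℝ} (hi : 1 ≤ i) (hij : i < j)
    (hj : j ≤ n) (hs : s = 1 ∨ s = -1) (he : e = 1 ∨ e = -1) :
    s • eps n i + e • eps n j ∈ rootsD n := by
  rcases hs with rfl | rfl <;> rcases he with rfl | rfl
  · exact .inl ⟨i, j, hi, hij, hj, .inr (by module)⟩
  · exact .inl ⟨i, j, hi, hij, hj, .inl (by module)⟩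
  · exact .inr ⟨i, j, hi, hij, hj, .inl (by module)⟩
  · exact .inr ⟨i, j, hi, hij, hj, .inr (by module)⟩

theorem rootsD_eq_rootsDFrom_one : rootsD n = rootsDFrom n 1 := by
  apply Set.Subset.antisymm
  · rintro v (⟨i, j, hi, hij, hj, rfl | rfl⟩ | ⟨i, j, hi, hij, hj, hv | hv⟩)
    · exact eps_sub_eps_mem_rootsDFrom hi (by omega) (by omega) hj hij.ne
    · exact eps_add_eps_mem_rootsDFrom hi (by omega) (by omega) hj hij.ne
    · simpa [← hv] using
        neg_mem_rootsDFrom (eps_sub_eps_mem_rootsDFrom (n := n) hi (by omega) (by omega) hj hij.ne)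
    · simpa [← hv] using
        neg_mem_rootsDFrom (eps_add_eps_mem_rootsDFrom (n := n) hi (by omega) (by omega) hj hij.ne)
  · rintro v ⟨i, j, s, e, hi, hj, hin, hjn, hij, hs, he, rfl⟩
    rcases hij.lt_or_gt with h | h
    · exact smul_eps_add_smul_eps_mem_rootsD hi h hjn hs he
    · rw [add_comm]
      exact smul_eps_add_smul_eps_mem_rootsD hj h hin he hs

theorem le_of_mem_rootsDFrom {v : EuclideanSpace ℝ (Fin n)} (hv : v ∈ rootsDFrom n l) :
    l + 1 ≤ n := by
  obtain ⟨i, j, s, e, hi, hj, hin, hjn, hij, -⟩ := hv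
  omega

theorem inner_self_of_mem_rootsDFrom (hl : 1 ≤ l) {v : EuclideanSpace ℝ (Fin n)}
    (hv : v ∈ rootsDFrom n l) : ⟪v, v⟫ = 2 := by
  obtain ⟨i, j, s, e, hi, hj, hin, hjn, hij, hs, he, rfl⟩ := hv
  simp (disch := omega) only [inner_add_left, inner_add_right, inner_smul_left,
    inner_smul_right, inner_eps_self, inner_eps_of_ne, conj_trivial]
  rcases hs with rfl | rfl <;> rcases he with rfl | rfl <;> norm_num

theorem ne_zero_of_mem_rootsDFrom (hl : 1 ≤ l) {v : EuclideanSpace ℝ (Fin n)}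
    (hv : v ∈ rootsDFrom n l) : v ≠ 0 := by
  rintro rfl
  simpa using inner_self_of_mem_rootsDFrom hl hv

theorem inner_eps_of_mem_rootsDFrom {v : EuclideanSpace ℝ (Fin n)} (hv : v ∈ rootsDFrom n l)
    {k : ℕ} (hk : k < l) : ⟪v, eps n k⟫ = 0 := by
  obtain ⟨i, j, s, e, hi, hj, hin, hjn, hij, hs, he, rfl⟩ := hv
  simp (disch := omega) [inner_add_left, inner_smul_left, inner_eps_of_ne]

theorem inner_rootsD_self {v : EuclideanSpace ℝ (Fin n)} (hv : v ∈ rootsD n) : ⟪v, v⟫ = 2 :=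
  inner_self_of_mem_rootsDFrom le_rfl (rootsD_eq_rootsDFrom_one ▸ hv)

theorem exists_mem_Icc_ne_ne (hn : l + 2 ≤ n) (i j : ℕ) :
    ∃ k, l ≤ k ∧ k ≤ n ∧ k ≠ i ∧ k ≠ j :=
  ⟨if l ≠ i ∧ l ≠ j then l else if l + 1 ≠ i ∧ l + 1 ≠ j then l + 1 else l + 2,
    by split_ifs <;> omega⟩

theorem inner_eps_add_eps_ne_zero {i j x y : ℕ} {s e : ℝ} (hi : 1 ≤ i) (hj : 1 ≤ j)
    (hin : i ≤ n) (hjn : j ≤ n) (hij : i ≠ j) (hs : s = 1 ∨ s = -1) (he : e = 1 ∨ e = -1)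
    (hx : x = i ∨ x = j) (hyi : y ≠ i) (hyj : y ≠ j) :
    ⟪eps n x + eps n y, s • eps n i + e • eps n j⟫ ≠ 0 := by
  rcases hx with rfl | rfl <;>
    simp (disch := omega) only [inner_add_left, inner_add_right, inner_smul_right,
      inner_eps_self, inner_eps_of_ne] <;>
    rcases hs with rfl | rfl <;> rcases he with rfl | rfl <;> norm_num

theorem reflTransGen_linked_rootsDFrom (hl : 1 ≤ l) (hn : l + 2 ≤ n)
    {a b : EuclideanSpace ℝ (Fin n)} (ha : a ∈ rootsDFrom n l) (hb : b ∈ rootsDFrom n l) :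
    Relation.ReflTransGen (Linked (rootsDFrom n l)) a b := by
  obtain ⟨i, j, s, e, hi, hj, hin, hjn, hij, hs, he, rfl⟩ := id ha
  obtain ⟨p, q, t, f, hp, hq, hpn, hqn, hpq, ht, hf, rfl⟩ := id hb
  -- `a` and `b` are joined through `ε_x + ε_y` when each support contains exactly one of `x, y`
  have hpath : ∀ x y, l ≤ x → l ≤ y → x ≤ n → y ≤ n → x ≠ y →
      ⟪eps n x + eps n y, s • eps n i + e • eps n j⟫ ≠ 0 →
      ⟪eps n x + eps n y, t • eps n p + f • eps n q⟫ ≠ 0 →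
      Relation.ReflTransGen (Linked (rootsDFrom n l))
        (s • eps n i + e • eps n j) (t • eps n p + f • eps n q) := by
    intro x y hx hy hxn hyn hxy hac hcb
    have hc := eps_add_eps_mem_rootsDFrom hx hy hxn hyn hxy
    exact .head ⟨ha, hc, by rwa [real_inner_comm]⟩ (.single ⟨hc, hb, hcb⟩)
  by_cases hsupp : (i = p ∨ i = q) ∧ (j = p ∨ j = q)
  · obtain ⟨k, hlk, hkn, hki, hkj⟩ := exists_mem_Icc_ne_ne hn i j
    exact hpath i k hi hlk hin hkn hki.symm
      (inner_eps_add_eps_ne_zero (by omega) (by omega) hin hjn hij hs he (.inl rfl) hki hkj)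
      (inner_eps_add_eps_ne_zero (by omega) (by omega) hpn hqn hpq ht hf hsupp.1
        (by omega) (by omega))
  · obtain ⟨x, hx, hxp, hxq⟩ : ∃ x, (x = i ∨ x = j) ∧ x ≠ p ∧ x ≠ q := by
      by_cases h : i ≠ p ∧ i ≠ q
      · exact ⟨i, .inl rfl, h⟩
      · exact ⟨j, .inr rfl, by omega⟩
    obtain ⟨y, hy, hyi, hyj⟩ : ∃ y, (y = p ∨ y = q) ∧ y ≠ i ∧ y ≠ j := by
      by_cases h : p ≠ i ∧ p ≠ j
      · exact ⟨p, .inl rfl, h⟩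
      · exact ⟨q, .inr rfl, by omega⟩
    refine hpath x y (by omega) (by omega) (by omega) (by omega) (by omega)
      (inner_eps_add_eps_ne_zero (by omega) (by omega) hin hjn hij hs he hx hyi hyj) ?_
    rw [add_comm]
    exact inner_eps_add_eps_ne_zero (by omega) (by omega) hpn hqn hpq ht hf hy hxp hxq

theorem sep_rootsDFrom_inner_eq_zero (hl : 1 ≤ l) (hn : l + 1 ≤ n) :
    {α ∈ rootsDFrom n l | ⟪α, eps n l + eps n (l + 1)⟫ = 0} =
      {eps n l - eps n (l + 1), -(eps n l - eps n (l + 1))} ∪ rootsDFrom n (l + 2) := by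
  apply Set.Subset.antisymm
  · rintro _ ⟨⟨i, j, s, e, hi, hj, hin, hjn, hij, hs, he, rfl⟩, horth⟩
    have hshape : (l + 2 ≤ i ∧ l + 2 ≤ j) ∨
        ((i = l ∧ j = l + 1 ∨ i = l + 1 ∧ j = l) ∧ e = -s) := by
      simp only [inner_add_left, inner_add_right, inner_smul_left, inner_eps_eps (n := n)
        (by omega : 1 ≤ i) hin, inner_eps_eps (n := n) (by omega : 1 ≤ j) hjn,
        conj_trivial] at horth
      rcases hs with rfl | rfl <;> rcases he with rfl | rfl <;>
        split_ifs at horth <;> norm_num at horth <;> (try norm_num) <;> omega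
    rcases hshape with ⟨hi2, hj2⟩ | ⟨hij' | hij', rfl⟩ <;> [right; left; left]
    · exact ⟨i, j, s, e, hi2, hj2, hin, hjn, hij, hs, he, rfl⟩
    all_goals
      obtain ⟨rfl, rfl⟩ := hij'
      rcases hs with rfl | rfl
      all_goals first | (left; module) | (right; module)
  · rintro v (hv | hv)
    · have hr := eps_sub_eps_succ_mem_rootsDFrom hn
      refine ⟨by rcases hv with rfl | rfl; exacts [hr, neg_mem_rootsDFrom hr], ?_⟩
      rcases hv with rfl | rfl <;>
        simp (disch := omega) only [inner_neg_left, inner_sub_left, inner_add_right,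
          inner_eps_self, inner_eps_of_ne] <;> norm_num
    · refine ⟨rootsDFrom_mono (by omega) hv, ?_⟩
      rw [inner_add_right, inner_eps_of_mem_rootsDFrom hv (by omega),
        inner_eps_of_mem_rootsDFrom hv (by omega), add_zero]

theorem rootsDFrom_eq_union_of_add_one_eq (hl : 1 ≤ l) (hn : l + 1 = n) :
    rootsDFrom n l =
      {eps n l - eps n (l + 1), -(eps n l - eps n (l + 1))} ∪
        {eps n l + eps n (l + 1), -(eps n l + eps n (l + 1))} := by
  apply Set.Subset.antisymm
  · rintro _ ⟨i, j, s, e, hi, hj, hin, hjn, hij, hs, he, rfl⟩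
    obtain ⟨rfl, rfl⟩ | ⟨rfl, rfl⟩ : i = l ∧ j = l + 1 ∨ i = l + 1 ∧ j = l := by omega
    all_goals
      rcases hs with rfl | rfl <;> rcases he with rfl | rfl
      all_goals first
        | (left; left; module) | (left; right; module)
        | (right; left; module) | (right; right; module)
  · have hsub := eps_sub_eps_succ_mem_rootsDFrom (n := n) hn.le
    have hadd := eps_add_eps_succ_mem_rootsDFrom (n := n) hn.le
    rintro v ((rfl | rfl) | (rfl | rfl))
    exacts [hsub, neg_mem_rootsDFrom hsub, hadd, neg_mem_rootsDFrom hadd]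

theorem isComponent_rootsDFrom_iff (hl : 1 ≤ l) {C : Set (EuclideanSpace ℝ (Fin n))} :
    IsComponent (rootsDFrom n l) C ↔
      (l + 2 ≤ n ∧ C = rootsDFrom n l) ∨
        (l + 1 = n ∧ (C = {eps n l - eps n (l + 1), -(eps n l - eps n (l + 1))} ∨
          C = {eps n l + eps n (l + 1), -(eps n l + eps n (l + 1))})) := by
  rcases lt_trichotomy (l + 1) n with hn | hn | hn
  · rw [isComponent_iff_of_connected
      ⟨_, eps_add_eps_succ_mem_rootsDFrom hn.le⟩
      fun a ha b hb => reflTransGen_linked_rootsDFrom hl hn ha hb]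
    constructor
    · exact fun h => .inl ⟨hn, h⟩
    · rintro (⟨-, h⟩ | ⟨h, -⟩)
      exacts [h, absurd h hn.ne]
  · have horth : ∀ x ∈ ({eps n l - eps n (l + 1), -(eps n l - eps n (l + 1))} : Set _),
        ∀ y ∈ ({eps n l + eps n (l + 1), -(eps n l + eps n (l + 1))} : Set _), ⟪x, y⟫ = 0 := by
      rintro x (rfl | rfl) y (rfl | rfl) <;>
        simp (disch := omega) only [inner_neg_left, inner_neg_right, inner_sub_left,
          inner_add_right, inner_eps_self, inner_eps_of_ne] <;> norm_num
    have hsub := eps_sub_eps_succ_mem_rootsDFrom (n := n) hn.le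
    have hadd := eps_add_eps_succ_mem_rootsDFrom (n := n) hn.le
    rw [rootsDFrom_eq_union_of_add_one_eq hl hn, isComponent_union_iff horth,
      isComponent_pair_iff (ne_zero_of_mem_rootsDFrom hl hsub),
      isComponent_pair_iff (ne_zero_of_mem_rootsDFrom hl hadd)]
    constructor
    · exact fun h => .inr ⟨hn, h⟩
    · rintro (⟨h, -⟩ | ⟨-, h⟩)
      exacts [absurd h (by omega), h]
  · rw [Set.eq_empty_of_forall_notMem fun v hv => (le_of_mem_rootsDFrom hv).not_gt hn]
    simp only [not_isComponent_empty, false_iff]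
    omega

theorem eps_add_eps_mem_rootsD {i j : ℕ} (hi : 1 ≤ i) (hj : 1 ≤ j) (hin : i ≤ n) (hjn : j ≤ n)
    (hij : i ≠ j) : eps n i + eps n j ∈ rootsD n :=
  rootsD_eq_rootsDFrom_one ▸ eps_add_eps_mem_rootsDFrom hi hj hin hjn hij

theorem eps_sub_eps_mem_rootsD {i j : ℕ} (hi : 1 ≤ i) (hj : 1 ≤ j) (hin : i ≤ n) (hjn : j ≤ n)
    (hij : i ≠ j) : eps n i - eps n j ∈ rootsD n :=
  rootsD_eq_rootsDFrom_one ▸ eps_sub_eps_mem_rootsDFrom hi hj hin hjn hij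

theorem exists_posD_add_mem_rootsD (hl : 1 ≤ l) (hn : l + 2 ≤ n) {β : EuclideanSpace ℝ (Fin n)}
    (hβ : β ∈ rootsDFrom n l) (hne : β ≠ eps n l + eps n (l + 1)) :
    ∃ α ∈ rootsDFrom n l, α ∈ posD n ∧ β + α ∈ rootsD n := by
  obtain ⟨i, j, s, e, hi, hj, hin, hjn, hij, hs, he, rfl⟩ := hβ
  have hsub : ∀ a b, l ≤ a → a < b → b ≤ n →
      s • eps n i + e • eps n j + (eps n a - eps n b) ∈ rootsD n →
      ∃ α ∈ rootsDFrom n l, α ∈ posD n ∧ s • eps n i + e • eps n j + α ∈ rootsD n :=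
    fun a b ha hab hb h => ⟨_, eps_sub_eps_mem_rootsDFrom ha (by omega) (by omega) hb hab.ne,
      ⟨a, b, by omega, hab, hb, .inl rfl⟩, h⟩
  have hadd : ∀ a b, l ≤ a → l ≤ b → a ≤ n → b ≤ n → a ≠ b →
      s • eps n i + e • eps n j + (eps n a + eps n b) ∈ rootsD n →
      ∃ α ∈ rootsDFrom n l, α ∈ posD n ∧ s • eps n i + e • eps n j + α ∈ rootsD n :=
    fun a b ha hb han hbn hab h => ⟨_, eps_add_eps_mem_rootsDFrom ha hb han hbn hab,
      eps_add_eps_mem_posD (by omega) (by omega) han hbn hab, h⟩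
  obtain ⟨k, hk, hkn, hki, hkj⟩ := exists_mem_Icc_ne_ne hn i j
  rcases hs with rfl | rfl <;> rcases he with rfl | rfl
  · by_cases hil : i = l
    · subst hil
      have hj' : j ≠ i + 1 := by rintro rfl; exact hne (by module)
      refine hsub (i + 1) j (by omega) (by omega) hjn ?_
      convert eps_add_eps_mem_rootsD (n := n) (i := i) (j := i + 1)
        (by omega) (by omega) (by omega) (by omega) (by omega) using 1
      module
    by_cases hjl : j = l
    · subst hjl
      have hi' : i ≠ j + 1 := by rintro rfl; exact hne (by module)
      refine hsub (j + 1) i (by omega) (by omega) hin ?_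
      convert eps_add_eps_mem_rootsD (n := n) (i := j) (j := j + 1)
        (by omega) (by omega) (by omega) (by omega) (by omega) using 1
      module
    refine hsub l i le_rfl (by omega) hin ?_
    convert eps_add_eps_mem_rootsD (n := n) (i := l) (j := j)
        (by omega) (by omega) (by omega) (by omega) (by omega) using 1
    module
  · refine hadd j k hj hk hjn hkn hkj.symm ?_
    convert eps_add_eps_mem_rootsD (n := n) (i := i) (j := k)
        (by omega) (by omega) (by omega) (by omega) (by omega) using 1
    module
  · refine hadd i k hi hk hin hkn hki.symm ?_
    convert eps_add_eps_mem_rootsD (n := n) (i := j) (j := k)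
        (by omega) (by omega) (by omega) (by omega) (by omega) using 1
    module
  · refine hadd i k hi hk hin hkn hki.symm ?_
    convert eps_sub_eps_mem_rootsD (n := n) (i := k) (j := j)
        (by omega) (by omega) (by omega) (by omega) (by omega) using 1
    module

theorem inner_eps_add_eps_nonneg (hl : 1 ≤ l) (hn : l + 1 ≤ n) {α : EuclideanSpace ℝ (Fin n)}
    (hα : α ∈ rootsDFrom n l) (hαpos : α ∈ posD n) : 0 ≤ ⟪eps n l + eps n (l + 1), α⟫ := by
  obtain ⟨i, j, hi, hij, hjn, hα'⟩ := hαpos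
  have hli : l ≤ i := by
    by_contra hil
    have h := inner_eps_of_mem_rootsDFrom hα (k := i) (by omega)
    rcases hα' with rfl | rfl <;>
      simp (disch := omega) only [inner_sub_left, inner_add_left, inner_eps_self,
        inner_eps_of_ne] at h <;> norm_num at h
  rcases hα' with rfl | rfl <;>
    simp only [inner_add_left, inner_sub_right, inner_add_right,
      inner_eps_eps (n := n) hl (by omega), inner_eps_eps (by omega : 1 ≤ l + 1) hn] <;>
    split_ifs <;> norm_num <;> omega

theorem isHighestRoot_rootsDFrom_iff (hl : 1 ≤ l) (hn : l + 2 ≤ n)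
    {β : EuclideanSpace ℝ (Fin n)} :
    IsHighestRoot (rootsD n) (posD n) (rootsDFrom n l) β ↔ β = eps n l + eps n (l + 1) := by
  constructor
  · rintro ⟨hβ, -, hmax⟩
    by_contra hne
    obtain ⟨α, hα, hαpos, hsum⟩ := exists_posD_add_mem_rootsD hl hn hβ hne
    exact hmax α hα hαpos hsum
  · rintro rfl
    refine ⟨eps_add_eps_succ_mem_rootsDFrom (by omega),
      eps_add_eps_mem_posD hl (by omega) (by omega) (by omega) (by omega), fun α hα hαpos => ?_⟩
    exact add_notMem_of_inner_nonneg (fun _ => inner_rootsD_self) two_pos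
      (eps_add_eps_mem_rootsD hl (by omega) (by omega) (by omega) (by omega)) (.inl hαpos)
      (inner_eps_add_eps_nonneg hl (by omega) hα hαpos)

theorem isHighestRoot_pair_rootsD_iff {r β : EuclideanSpace ℝ (Fin n)} (hr : r ∈ posD n) :
    IsHighestRoot (rootsD n) (posD n) {r, -r} β ↔ β = r :=
  isHighestRoot_pair_iff hr (neg_notMem_posD hr)
    (add_notMem_of_inner_nonneg (fun _ => inner_rootsD_self) two_pos (.inl hr) (.inl hr)
      (by rw [inner_rootsD_self (.inl hr)]; norm_num))

theorem isComponent_sep_rootsDFrom_iff (hl : 1 ≤ l) (hn : l + 1 ≤ n)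
    {C : Set (EuclideanSpace ℝ (Fin n))} :
    IsComponent {α ∈ rootsDFrom n l | ⟪α, eps n l + eps n (l + 1)⟫ = 0} C ↔
      C = {eps n l - eps n (l + 1), -(eps n l - eps n (l + 1))} ∨
        IsComponent (rootsDFrom n (l + 2)) C := by
  have horth : ∀ x ∈ ({eps n l - eps n (l + 1), -(eps n l - eps n (l + 1))} : Set _),
      ∀ y ∈ rootsDFrom n (l + 2), ⟪x, y⟫ = 0 := by
    intro x hx y hy
    have hl0 := inner_eps_of_mem_rootsDFrom hy (k := l) (by omega)
    have hl1 := inner_eps_of_mem_rootsDFrom hy (k := l + 1) (by omega)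
    rw [real_inner_comm] at hl0 hl1
    rcases hx with rfl | rfl <;> simp [inner_sub_left, hl0, hl1]
  rw [sep_rootsDFrom_inner_eq_zero hl hn, isComponent_union_iff horth,
    isComponent_pair_iff (ne_zero_of_mem_rootsDFrom hl
      (eps_sub_eps_succ_mem_rootsDFrom hn))]

theorem cascadeSub_of_isComponent_rootsDFrom (hl : Odd l) {C : Set (EuclideanSpace ℝ (Fin n))}
    (hC : IsComponent (rootsDFrom n l) C) : CascadeSub (rootsD n) (posD n) C := by
  obtain ⟨k, rfl⟩ := hl
  induction k generalizing C with
  | zero => exact .base C (by simpa [rootsD_eq_rootsDFrom_one] using hC)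
  | succ k ih =>
    have hn := le_of_mem_rootsDFrom hC.choose_spec.1
    have hK := ih ((isComponent_rootsDFrom_iff (by omega)).2 (.inl ⟨by omega, rfl⟩))
    refine .step _ C _ hK ((isHighestRoot_rootsDFrom_iff (by omega) (by omega)).2 rfl) ?_
    rw [isComponent_sep_rootsDFrom_iff (by omega) (by omega)]
    exact .inr (by convert hC using 2; ring)

theorem cascadeSub_pair_eps_sub_eps (hl : Odd l) (hn : l + 1 ≤ n) :
    CascadeSub (rootsD n) (posD n) {eps n l - eps n (l + 1), -(eps n l - eps n (l + 1))} := by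
  rcases hn.lt_or_eq with hn | hn
  · refine .step _ _ _ (cascadeSub_of_isComponent_rootsDFrom hl
      ((isComponent_rootsDFrom_iff hl.pos).2 (.inl ⟨hn, rfl⟩)))
      ((isHighestRoot_rootsDFrom_iff hl.pos hn).2 rfl) ?_
    exact (isComponent_sep_rootsDFrom_iff hl.pos hn.le).2 (.inl rfl)
  · exact cascadeSub_of_isComponent_rootsDFrom hl
      ((isComponent_rootsDFrom_iff hl.pos).2 (.inr ⟨hn, .inl rfl⟩))

def IsCascadeSubD (n l : ℕ) (K : Set (EuclideanSpace ℝ (Fin n))) : Prop :=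
  Odd l ∧ l + 1 ≤ n ∧
    ((l + 2 ≤ n ∧ K = rootsDFrom n l) ∨
      K = {eps n l - eps n (l + 1), -(eps n l - eps n (l + 1))} ∨
      (l + 1 = n ∧ K = {eps n l + eps n (l + 1), -(eps n l + eps n (l + 1))}))

theorem isCascadeSubD_of_isComponent_rootsDFrom (hl : Odd l) {C : Set (EuclideanSpace ℝ (Fin n))}
    (hC : IsComponent (rootsDFrom n l) C) : IsCascadeSubD n l C := by
  have hn := le_of_mem_rootsDFrom hC.choose_spec.1
  rcases (isComponent_rootsDFrom_iff hl.pos).1 hC with h | ⟨h, rfl | rfl⟩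
  exacts [⟨hl, hn, .inl h⟩, ⟨hl, hn, .inr (.inl rfl)⟩, ⟨hl, hn, .inr (.inr ⟨h, rfl⟩)⟩]

theorem CascadeSub.exists_isCascadeSubD {K : Set (EuclideanSpace ℝ (Fin n))}
    (hK : CascadeSub (rootsD n) (posD n) K) : ∃ l, IsCascadeSubD n l K := by
  induction hK with
  | base C hC =>
    exact ⟨1, isCascadeSubD_of_isComponent_rootsDFrom odd_one (rootsD_eq_rootsDFrom_one ▸ hC)⟩
  | step K C β _ hβ hC ih =>
    obtain ⟨l, hl, hln, ⟨h2, rfl⟩ | rfl | ⟨-, rfl⟩⟩ := ih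
    · rw [(isHighestRoot_rootsDFrom_iff hl.pos h2).1 hβ,
        isComponent_sep_rootsDFrom_iff hl.pos hln] at hC
      rcases hC with rfl | hC
      · exact ⟨l, hl, hln, .inr (.inl rfl)⟩
      · exact ⟨l + 2, isCascadeSubD_of_isComponent_rootsDFrom (hl.add_even even_two) hC⟩
    · rw [sep_pair_inner_eq_zero (ne_zero_of_mem_rootsDFrom hl.pos
        (eps_sub_eps_succ_mem_rootsDFrom hln)) hβ.1] at hC
      exact absurd hC (not_isComponent_empty C)
    · rw [sep_pair_inner_eq_zero (ne_zero_of_mem_rootsDFrom hl.pos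
        (eps_add_eps_succ_mem_rootsDFrom hln)) hβ.1] at hC
      exact absurd hC (not_isComponent_empty C)

theorem cascadeSet_rootsD :
    cascadeSet (rootsD n) (posD n) = {v | ∃ l, Odd l ∧ l + 1 ≤ n ∧
      (v = eps n l + eps n (l + 1) ∨ v = eps n l - eps n (l + 1))} := by
  ext v
  constructor
  · rintro ⟨K, hK, hv⟩
    obtain ⟨l, hl, hln, ⟨h2, rfl⟩ | rfl | ⟨-, rfl⟩⟩ := hK.exists_isCascadeSubD
    · exact ⟨l, hl, hln, .inl ((isHighestRoot_rootsDFrom_iff hl.pos h2).1 hv)⟩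
    · exact ⟨l, hl, hln, .inr ((isHighestRoot_pair_rootsD_iff
        ⟨l, l + 1, hl.pos, by omega, hln, .inl rfl⟩).1 hv)⟩
    · exact ⟨l, hl, hln, .inl ((isHighestRoot_pair_rootsD_iff
        ⟨l, l + 1, hl.pos, by omega, hln, .inr rfl⟩).1 hv)⟩
  · rintro ⟨l, hl, hln, rfl | rfl⟩
    · rcases hln.lt_or_eq with hn | hn
      · exact ⟨_, cascadeSub_of_isComponent_rootsDFrom hl
          ((isComponent_rootsDFrom_iff hl.pos).2 (.inl ⟨hn, rfl⟩)),
          (isHighestRoot_rootsDFrom_iff hl.pos hn).2 rfl⟩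
      · exact ⟨_, cascadeSub_of_isComponent_rootsDFrom hl
          ((isComponent_rootsDFrom_iff hl.pos).2 (.inr ⟨hn, .inr rfl⟩)),
          (isHighestRoot_pair_rootsD_iff ⟨l, l + 1, hl.pos, by omega, hln, .inr rfl⟩).2 rfl⟩
    · exact ⟨_, cascadeSub_pair_eps_sub_eps hl hln,
        (isHighestRoot_pair_rootsD_iff ⟨l, l + 1, hl.pos, by omega, hln, .inl rfl⟩).2 rfl⟩

end TypeD

theorem le_ite_even_iff {n i : ℕ} :
    i ≤ (if Even n then n / 2 else (n - 1) / 2) ↔ 2 * i ≤ n := by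
  split_ifs with h <;> rw [← Nat.not_odd_iff_even, Nat.odd_iff] at * <;> omega

/-- The Kostant cascade of `D_n` (`n ≥ 4`) consists of
`β_i = ε_{2i-1} + ε_{2i}` for `1 ≤ i ≤ ⌊(n-1)/2⌋`, together with
`α_{2i-1} = ε_{2i-1} - ε_{2i}` for `1 ≤ i ≤ (n-1)/2` if `n` is odd; and
additionally `α_n = ε_{n-1} + ε_n`, and the `α_{2i-1}` for `1 ≤ i ≤ n/2`,
if `n` is even. -/
theorem statement_6 (n : ℕ) (hn : 4 ≤ n) :
    cascadeSet (rootsD n) (posD n)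
      = {v | ∃ i, 1 ≤ i ∧ i ≤ (n - 1) / 2 ∧ v = eps n (2 * i - 1) + eps n (2 * i)}
        ∪ {v | ∃ i, 1 ≤ i ∧ i ≤ (if Even n then n / 2 else (n - 1) / 2) ∧
            v = eps n (2 * i - 1) - eps n (2 * i)}
        ∪ {v | Even n ∧ v = eps n (n - 1) + eps n n} := by
  rw [cascadeSet_rootsD]
  ext v
  simp only [Set.mem_union, Set.mem_ofPred_eq, le_ite_even_iff]
  constructor
  · rintro ⟨l, ⟨k, rfl⟩, hln, rfl | rfl⟩
    · by_cases h : 2 * k + 3 ≤ n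
      · exact .inl (.inl ⟨k + 1, by omega, by omega, by congr 2⟩)
      · exact .inr ⟨⟨k + 1, by omega⟩, by congr 2 <;> omega⟩
    · exact .inl (.inr ⟨k + 1, by omega, by omega, by congr 2⟩)
  · rintro ((⟨i, hi, hin, rfl⟩ | ⟨i, hi, hin, rfl⟩) | ⟨⟨k, hk⟩, rfl⟩)
    · exact ⟨2 * i - 1, ⟨i - 1, by omega⟩, by omega, .inl (by congr 2; omega)⟩
    · exact ⟨2 * i - 1, ⟨i - 1, by omega⟩, by omega, .inr (by congr 2; omega)⟩
    · exact ⟨n - 1, ⟨k - 1, by omega⟩, by omega, .inl (by congr 2; omega)⟩
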